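/- Existence of solutions to the nonlocal Plateau problem: let d ≥ 1, let K : ℝ^d → [0,∞) be a measurable even function, and let Ω ⊆ ℝ^d be open and bounded. Suppose E₀ ⊆ ℝ^d is measurable with Per_K(E₀,Ω) < ∞, and let 𝓕 := { F ⊆ ℝ^d measurable : Per_K(F,Ω) < ∞ and F ∩ Ωᶜ = E₀ ∩ Ωᶜ }. Then there exists E ∈ 𝓕 such that Per_K(E,Ω) ≤ Per_K(F,Ω) for every F ∈ 𝓕. -/

import Mathlib

open MeasureTheory Filter Set
open scoped ENNReal Topology NNReal RealInnerProductSpace symmDiff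

noncomputable section

abbrev V (d : ℕ) := EuclideanSpace ℝ (Fin d)

variable {d : ℕ}

/-- Nonlocal interaction for an `ℝ≥0∞`-valued kernel. -/
def LK (K : V d → ℝ≥0∞) (E F : Set (V d)) : ℝ≥0∞ :=
  ∫⁻ x in F, ∫⁻ y in E, K (y - x)

/-- Nonlocal perimeter for an `ℝ≥0∞`-valued kernel. -/
def PerK (K : V d → ℝ≥0∞) (E Ω : Set (V d)) : ℝ≥0∞ :=
  LK K (E ∩ Ω) (Eᶜ ∩ Ω) + LK K (E ∩ Ω) (Eᶜ ∩ Ωᶜ) + LK K (E ∩ Ωᶜ) (Eᶜ ∩ Ω)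

/-- Nonlocal interaction for a real-valued kernel. -/
def LKr (K : V d → ℝ) (E F : Set (V d)) : ℝ≥0∞ :=
  ∫⁻ x in F, ∫⁻ y in E, ENNReal.ofReal (K (y - x))

/-- Nonlocal perimeter for a real-valued kernel. -/
def PerKr (K : V d → ℝ) (E Ω : Set (V d)) : ℝ≥0∞ :=
  LKr K (E ∩ Ω) (Eᶜ ∩ Ω) + LKr K (E ∩ Ω) (Eᶜ ∩ Ωᶜ) + LKr K (E ∩ Ωᶜ) (Eᶜ ∩ Ω)

/-- Local part of the nonlocal energy. -/
def J1 (K : V d → ℝ) (u : V d → ℝ) (Ω : Set (V d)) : ℝ≥0∞ :=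
  ∫⁻ y in Ω, ∫⁻ x in Ω, ENNReal.ofReal (K (y - x) * |u y - u x|)

/-- Nonlocal part of the nonlocal energy. -/
def J2 (K : V d → ℝ) (u : V d → ℝ) (Ω : Set (V d)) : ℝ≥0∞ :=
  ∫⁻ y in Ω, ∫⁻ x in Ωᶜ, ENNReal.ofReal (K (y - x) * |u y - u x|)

/-- Total nonlocal energy. -/
def JK (K : V d → ℝ) (u : V d → ℝ) (Ω : Set (V d)) : ℝ≥0∞ :=
  2⁻¹ * J1 K u Ω + J2 K u Ω

/-- Divergence of a vector field. -/
def divg (φ : V d → V d) (x : V d) : ℝ :=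
  ∑ i, fderiv ℝ φ x (EuclideanSpace.single i 1) i

/-- De Giorgi perimeter of `E` in an open set `A`. -/
def DGPer (E A : Set (V d)) : ℝ≥0∞ :=
  ⨆ (φ : V d → V d) (_ : ContDiff ℝ 1 φ) (_ : HasCompactSupport φ)
    (_ : tsupport φ ⊆ A) (_ : ∀ x, ‖φ x‖ ≤ 1),
    ENNReal.ofReal (∫ x in E, divg φ x)

/-- Total variation of `u` on `A`. -/
def variation (u : V d → ℝ) (A : Set (V d)) : ℝ≥0∞ :=
  ⨆ (φ : V d → V d) (_ : ContDiff ℝ 1 φ) (_ : HasCompactSupport φ)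
    (_ : tsupport φ ⊆ A) (_ : ∀ x, ‖φ x‖ ≤ 1),
    ENNReal.ofReal (∫ x in A, u x * divg φ x)

/-- Mass-preserving rescaling of a kernel. -/
def Keps (K : V d → ℝ) (ε : ℝ) (h : V d) : ℝ := (ε ^ d)⁻¹ * K (ε⁻¹ • h)

/-- `Ω` has Lipschitz boundary: near every boundary point, `Ω` is the subgraph of
a Lipschitz function in a suitable direction. -/
def HasLipschitzBoundary (Ω : Set (V d)) : Prop :=
  ∀ x ∈ frontier Ω, ∃ (U : Set (V d)) (e : V d) (φ : V d → ℝ) (L : ℝ≥0),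
    IsOpen U ∧ x ∈ U ∧ ‖e‖ = 1 ∧ LipschitzWith L φ ∧
    Ω ∩ U = {y ∈ U | ⟪y, e⟫ < φ (y - ⟪y, e⟫ • e)}

/-- The open unit cube. -/
def cube (d : ℕ) : Set (V d) := {x | ∀ i, x i ∈ Ioo (-(1/2) : ℝ) (1/2)}

/-- The lower halfspace. -/
def halfspace (d : ℕ) : Set (V (d + 1)) := {x | x (Fin.last d) < 0}

/-! With `ν` the measure `K(y - x) dx dy` on pairs `(x, y)` at least one of which lies in `Ω`,
`Per_K(E, Ω) = ν(Eᶜ × E)`. This functional is submodular,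
`P(A ∩ B) + P(A ∪ B) ≤ P(A) + P(B)`, and lower semicontinuous under pointwise convergence of
sets, while the admissible sets form a lattice closed under such limits. Let `m` be the infimum
and `P(F n) ≤ m + 2⁻ⁿ`. Since `P(A ∪ B) ≥ m`, submodularity gives
`P(A ∩ B) ≤ m + (P(A) - m) + (P(B) - m)`, so every finite intersection of the tail
`F n, F (n+1), …` has perimeter at most `m + ∑_{i ≥ n} 2⁻ⁱ`, and by semicontinuity so does the
whole tail intersection. These intersections increase to `liminf F`, which is a minimizer. -/

theorem Set.monotone_iInter_add {α : Type*} (S : ℕ → Set α) :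
    Monotone fun n => ⋂ i, S (i + n) := fun m n hmn =>
  iInter_mono' fun i => ⟨i + (n - m), by rw [add_assoc, Nat.sub_add_cancel hmn]⟩

theorem Set.eventually_mem_biInter_le_iff {α : Type*} (G : ℕ → Set α) (x : α) :
    ∀ᶠ j in atTop, (x ∈ ⋂ i ≤ j, G i ↔ x ∈ ⋂ i, G i) := by
  by_cases hx : x ∈ ⋂ i, G i
  · exact Eventually.of_forall fun j => iff_of_true (mem_iInter₂.2 fun i _ => mem_iInter.1 hx i) hx
  · obtain ⟨i₀, hi₀⟩ : ∃ i, x ∉ G i := by simpa using hx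
    exact eventually_atTop.2
      ⟨i₀, fun j hj => iff_of_false (fun h => hi₀ (mem_iInter₂.1 h i₀ hj)) hx⟩

theorem Monotone.eventually_mem_iff_mem_iUnion {α : Type*} {H : ℕ → Set α} (hH : Monotone H)
    (x : α) : ∀ᶠ n in atTop, (x ∈ H n ↔ x ∈ ⋃ n, H n) := by
  by_cases hx : x ∈ ⋃ n, H n
  · obtain ⟨n₀, hn₀⟩ := mem_iUnion.1 hx
    exact eventually_atTop.2 ⟨n₀, fun n hn => iff_of_true (hH hn hn₀) hx⟩
  · exact Eventually.of_forall fun n => iff_of_false (fun h => hx (mem_iUnion.2 ⟨n, h⟩)) hx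

theorem Set.inter_eq_of_eventually_mem_iff {α : Type*} {A : ℕ → Set α} {B S T : Set α}
    (hA : ∀ n, A n ∩ S = T) (hAB : ∀ x, ∀ᶠ n in atTop, (x ∈ A n ↔ x ∈ B)) : B ∩ S = T := by
  ext x
  obtain ⟨n, hn⟩ := (hAB x).exists
  rw [← hA n]
  exact hn.symm.and Iff.rfl

theorem MeasureTheory.measure_liminf_le_liminf_measure {β : Type*} [MeasurableSpace β]
    (ν : Measure β) (S : ℕ → Set β) :
    ν (liminf S atTop) ≤ liminf (fun n => ν (S n)) atTop := by
  rw [liminf_eq_iSup_iInf_of_nat', liminf_eq_iSup_iInf_of_nat']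
  simp only [iSup_eq_iUnion, iInf_eq_iInter]
  rw [(Set.monotone_iInter_add S).measure_iUnion]
  exact iSup_mono fun n => le_iInf fun i => measure_mono (iInter_subset _ i)

namespace MeasureTheory.Measure

variable {α : Type*} [MeasurableSpace α]

def cut (ν : Measure (α × α)) (E : Set α) : ℝ≥0∞ := ν (Eᶜ ×ˢ E)

theorem cut_inter_add_cut_union_le (ν : Measure (α × α)) {A B : Set α}
    (hA : MeasurableSet A) (hB : MeasurableSet B) :
    ν.cut (A ∩ B) + ν.cut (A ∪ B) ≤ ν.cut A + ν.cut B := by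
  have hcut : ∀ {E : Set α}, MeasurableSet E → MeasurableSet (Eᶜ ×ˢ E) := fun hE =>
    hE.compl.prod hE
  calc ν.cut (A ∩ B) + ν.cut (A ∪ B)
      = ν ((A ∩ B)ᶜ ×ˢ (A ∩ B) ∪ (A ∪ B)ᶜ ×ˢ (A ∪ B))
          + ν ((A ∩ B)ᶜ ×ˢ (A ∩ B) ∩ (A ∪ B)ᶜ ×ˢ (A ∪ B)) :=
        (measure_union_add_inter _ (hcut (hA.union hB))).symm
    _ ≤ ν (Aᶜ ×ˢ A ∪ Bᶜ ×ˢ B) + ν (Aᶜ ×ˢ A ∩ Bᶜ ×ˢ B) := by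
        refine add_le_add (measure_mono fun p hp => ?_) (measure_mono fun p hp => ?_) <;>
        · simp only [mem_union, mem_inter_iff, mem_prod, mem_compl_iff] at hp ⊢
          tauto
    _ = ν.cut A + ν.cut B := measure_union_add_inter _ (hcut hB)

theorem cut_le_liminf (ν : Measure (α × α)) {A : ℕ → Set α} {E : Set α}
    (hAE : ∀ x, ∀ᶠ n in atTop, (x ∈ A n ↔ x ∈ E)) :
    ν.cut E ≤ liminf (fun n => ν.cut (A n)) atTop := by
  refine le_trans (measure_mono fun p hp => ?_) (measure_liminf_le_liminf_measure ν _)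
  exact mem_liminf_iff_eventually_mem.2 <| ((hAE p.1).and (hAE p.2)).mono fun n hn =>
    ⟨mt hn.1.1 hp.1, hn.2.2 hp.2⟩

end MeasureTheory.Measure

section Minimization

variable {α : Type*} {𝓒 : Set (Set α)} {f : Set α → ℝ≥0∞} {m : ℝ≥0∞}

theorem submodular_inter_le
    (h_union : ∀ A ∈ 𝓒, ∀ B ∈ 𝓒, A ∪ B ∈ 𝓒)
    (h_sub : ∀ A ∈ 𝓒, ∀ B ∈ 𝓒, f (A ∩ B) + f (A ∪ B) ≤ f A + f B)
    (hm : m ≠ ⊤) (hm_le : ∀ C ∈ 𝓒, m ≤ f C) {A B : Set α} (hA : A ∈ 𝓒) (hB : B ∈ 𝓒)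
    {a b : ℝ≥0∞} (hfA : f A ≤ m + a) (hfB : f B ≤ m + b) :
    f (A ∩ B) ≤ m + (a + b) := by
  refine (ENNReal.add_le_add_iff_right hm).1 ?_
  calc f (A ∩ B) + m ≤ f (A ∩ B) + f (A ∪ B) := by gcongr; exact hm_le _ (h_union A hA B hB)
    _ ≤ f A + f B := h_sub A hA B hB
    _ ≤ (m + a) + (m + b) := add_le_add hfA hfB
    _ = m + (a + b) + m := by ring

theorem submodular_biInter_le
    (h_inter : ∀ A ∈ 𝓒, ∀ B ∈ 𝓒, A ∩ B ∈ 𝓒) (h_union : ∀ A ∈ 𝓒, ∀ B ∈ 𝓒, A ∪ B ∈ 𝓒)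
    (h_sub : ∀ A ∈ 𝓒, ∀ B ∈ 𝓒, f (A ∩ B) + f (A ∪ B) ≤ f A + f B)
    (hm : m ≠ ⊤) (hm_le : ∀ C ∈ 𝓒, m ≤ f C) {G : ℕ → Set α} {δ : ℕ → ℝ≥0∞}
    (hG : ∀ i, G i ∈ 𝓒) (hfG : ∀ i, f (G i) ≤ m + δ i) (j : ℕ) :
    (⋂ i ≤ j, G i) ∈ 𝓒 ∧ f (⋂ i ≤ j, G i) ≤ m + ∑ i ∈ Finset.range (j + 1), δ i := by
  induction j with
  | zero => simpa using ⟨hG 0, hfG 0⟩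
  | succ j ih =>
    rw [biInter_le_succ, Finset.sum_range_succ]
    exact ⟨h_inter _ ih.1 _ (hG _),
      submodular_inter_le h_union h_sub hm hm_le ih.1 (hG _) ih.2 (hfG _)⟩

theorem submodular_iInter_le
    (h_inter : ∀ A ∈ 𝓒, ∀ B ∈ 𝓒, A ∩ B ∈ 𝓒) (h_union : ∀ A ∈ 𝓒, ∀ B ∈ 𝓒, A ∪ B ∈ 𝓒)
    (h_lim : ∀ (A : ℕ → Set α) (B : Set α), (∀ n, A n ∈ 𝓒) →
      (∀ x, ∀ᶠ n in atTop, (x ∈ A n ↔ x ∈ B)) → B ∈ 𝓒)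
    (h_sub : ∀ A ∈ 𝓒, ∀ B ∈ 𝓒, f (A ∩ B) + f (A ∪ B) ≤ f A + f B)
    (h_lsc : ∀ (A : ℕ → Set α) (B : Set α), (∀ n, A n ∈ 𝓒) →
      (∀ x, ∀ᶠ n in atTop, (x ∈ A n ↔ x ∈ B)) → f B ≤ liminf (fun n => f (A n)) atTop)
    (hm : m ≠ ⊤) (hm_le : ∀ C ∈ 𝓒, m ≤ f C) {G : ℕ → Set α} {δ : ℕ → ℝ≥0∞}
    (hG : ∀ i, G i ∈ 𝓒) (hfG : ∀ i, f (G i) ≤ m + δ i) :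
    (⋂ i, G i) ∈ 𝓒 ∧ f (⋂ i, G i) ≤ m + ∑' i, δ i := by
  have hfin := submodular_biInter_le h_inter h_union h_sub hm hm_le hG hfG
  have hconv := eventually_mem_biInter_le_iff G
  refine ⟨h_lim _ _ (fun j => (hfin j).1) hconv,
    (h_lsc _ _ (fun j => (hfin j).1) hconv).trans (liminf_le_of_frequently_le' ?_)⟩
  exact Frequently.of_forall fun j =>
    (hfin j).2.trans (by gcongr; exact ENNReal.sum_le_tsum _)

theorem exists_isMinOn_of_submodular (hne : 𝓒.Nonempty)
    (h_inter : ∀ A ∈ 𝓒, ∀ B ∈ 𝓒, A ∩ B ∈ 𝓒) (h_union : ∀ A ∈ 𝓒, ∀ B ∈ 𝓒, A ∪ B ∈ 𝓒)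
    (h_lim : ∀ (A : ℕ → Set α) (B : Set α), (∀ n, A n ∈ 𝓒) →
      (∀ x, ∀ᶠ n in atTop, (x ∈ A n ↔ x ∈ B)) → B ∈ 𝓒)
    (h_sub : ∀ A ∈ 𝓒, ∀ B ∈ 𝓒, f (A ∩ B) + f (A ∪ B) ≤ f A + f B)
    (h_lsc : ∀ (A : ℕ → Set α) (B : Set α), (∀ n, A n ∈ 𝓒) →
      (∀ x, ∀ᶠ n in atTop, (x ∈ A n ↔ x ∈ B)) → f B ≤ liminf (fun n => f (A n)) atTop) :
    ∃ E ∈ 𝓒, IsMinOn f 𝓒 E := by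
  set m := ⨅ A ∈ 𝓒, f A
  have hm_le : ∀ A ∈ 𝓒, m ≤ f A := fun A hA => iInf₂_le A hA
  suffices ∃ E ∈ 𝓒, f E ≤ m from
    this.imp fun E ⟨hE, hfE⟩ => ⟨hE, isMinOn_iff.2 fun F hF => hfE.trans (hm_le F hF)⟩
  rcases eq_or_ne m ⊤ with hm | hm
  · obtain ⟨E, hE⟩ := hne
    exact ⟨E, hE, hm ▸ le_top⟩
  set ε : ℕ → ℝ≥0∞ := fun n => 2⁻¹ ^ n
  have hε_sum : ∑' n, ε n ≠ ⊤ := by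
    simp only [ε, ENNReal.tsum_geometric, ENNReal.one_sub_inv_two, inv_inv]
    exact ENNReal.ofNat_ne_top
  have h_near : ∀ n, ∃ F ∈ 𝓒, f F ≤ m + ε n := fun n => by
    obtain ⟨F, hlt⟩ := iInf_lt_iff.1 (ENNReal.lt_add_right hm (b := ε n) (by simp [ε]))
    obtain ⟨hF, hlt⟩ := iInf_lt_iff.1 hlt
    exact ⟨F, hF, hlt.le⟩
  choose F hF hfF using h_near
  set H : ℕ → Set α := fun n => ⋂ i, F (i + n)
  have hH : ∀ n, H n ∈ 𝓒 ∧ f (H n) ≤ m + ∑' i, ε (i + n) := fun n =>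
    submodular_iInter_le h_inter h_union h_lim h_sub h_lsc hm hm_le (fun i => hF (i + n))
      (fun i => hfF (i + n))
  have hconv := (monotone_iInter_add F).eventually_mem_iff_mem_iUnion
  have htail : Tendsto (fun n => m + ∑' i, ε (i + n)) atTop (𝓝 m) := by
    simpa using tendsto_const_nhds.add (ENNReal.tendsto_sum_nat_add ε hε_sum)
  refine ⟨⋃ n, H n, h_lim H _ (fun n => (hH n).1) hconv,
    (h_lsc H _ (fun n => (hH n).1) hconv).trans ?_⟩
  calc liminf (fun n => f (H n)) atTop
      ≤ liminf (fun n => m + ∑' i, ε (i + n)) atTop :=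
        liminf_le_liminf (Eventually.of_forall fun n => (hH n).2)
    _ = m := htail.liminf_eq

end Minimization

def interactionMeasure (K : V d → ℝ) : Measure (V d × V d) :=
  volume.withDensity fun p => ENNReal.ofReal (K (p.2 - p.1))

theorem LKr_eq_interactionMeasure {K : V d → ℝ} (hK : Measurable K) {A B : Set (V d)}
    (hA : MeasurableSet A) (hB : MeasurableSet B) :
    LKr K A B = interactionMeasure K (B ×ˢ A) := by
  have hk : Measurable fun p : V d × V d => ENNReal.ofReal (K (p.2 - p.1)) := by fun_prop
  rw [interactionMeasure, withDensity_apply _ (hB.prod hA), Measure.volume_eq_prod,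
    ← Measure.prod_restrict, lintegral_prod _ hk.aemeasurable]
  rfl

theorem PerKr_eq_cut {K : V d → ℝ} (hK : Measurable K) {E Ω : Set (V d)}
    (hE : MeasurableSet E) (hΩ : MeasurableSet Ω) :
    PerKr K E Ω = ((interactionMeasure K).restrict (Ωᶜ ×ˢ Ωᶜ)ᶜ).cut E := by
  have hpieces : (Eᶜ ×ˢ E) ∩ (Ωᶜ ×ˢ Ωᶜ)ᶜ
      = ((Eᶜ ∩ Ω) ×ˢ (E ∩ Ω) ∪ (Eᶜ ∩ Ωᶜ) ×ˢ (E ∩ Ω)) ∪ (Eᶜ ∩ Ω) ×ˢ (E ∩ Ωᶜ) := by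
    ext p
    simp only [mem_inter_iff, mem_union, mem_prod, mem_compl_iff]
    tauto
  have hdisj₁ : Disjoint ((Eᶜ ∩ Ω) ×ˢ (E ∩ Ω)) ((Eᶜ ∩ Ωᶜ) ×ˢ (E ∩ Ω)) :=
    disjoint_left.2 fun p hp hq => hq.1.2 hp.1.2
  have hdisj₂ : Disjoint ((Eᶜ ∩ Ω) ×ˢ (E ∩ Ω) ∪ (Eᶜ ∩ Ωᶜ) ×ˢ (E ∩ Ω)) ((Eᶜ ∩ Ω) ×ˢ (E ∩ Ωᶜ)) :=
    disjoint_left.2 fun p hp hq => hq.2.2 (hp.elim (·.2.2) (·.2.2))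
  rw [Measure.cut, Measure.restrict_apply (hE.compl.prod hE), hpieces,
    measure_union hdisj₂ ((hE.compl.inter hΩ).prod (hE.inter hΩ.compl)),
    measure_union hdisj₁ ((hE.compl.inter hΩ.compl).prod (hE.inter hΩ)), PerKr,
    LKr_eq_interactionMeasure hK (hE.inter hΩ) (hE.compl.inter hΩ),
    LKr_eq_interactionMeasure hK (hE.inter hΩ) (hE.compl.inter hΩ.compl),
    LKr_eq_interactionMeasure hK (hE.inter hΩ.compl) (hE.compl.inter hΩ)]

theorem plateau_existence_general {d : ℕ}
    (K : V d → ℝ) (hKm : Measurable K)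
    (Ω : Set (V d)) (hΩo : IsOpen Ω)
    (E₀ : Set (V d)) (hE₀ : MeasurableSet E₀) (hE₀fin : PerKr K E₀ Ω < ⊤) :
    ∃ E : Set (V d), MeasurableSet E ∧ PerKr K E Ω < ⊤ ∧ E ∩ Ωᶜ = E₀ ∩ Ωᶜ ∧
      ∀ F : Set (V d), MeasurableSet F → PerKr K F Ω < ⊤ → F ∩ Ωᶜ = E₀ ∩ Ωᶜ →
        PerKr K E Ω ≤ PerKr K F Ω := by
  set ν := (interactionMeasure K).restrict (Ωᶜ ×ˢ Ωᶜ)ᶜ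
  have hPer : ∀ {F}, MeasurableSet F → PerKr K F Ω = ν.cut F := fun hF =>
    PerKr_eq_cut hKm hF hΩo.measurableSet
  obtain ⟨E, ⟨hE, hEΩ⟩, hmin⟩ :=
    exists_isMinOn_of_submodular (𝓒 := {F | MeasurableSet F ∧ F ∩ Ωᶜ = E₀ ∩ Ωᶜ})
      (f := ν.cut) ⟨E₀, hE₀, rfl⟩
      (fun A ⟨hA, hAΩ⟩ B ⟨hB, hBΩ⟩ =>
        ⟨hA.inter hB, by rw [inter_inter_distrib_right, hAΩ, hBΩ, inter_self]⟩)
      (fun A ⟨hA, hAΩ⟩ B ⟨hB, hBΩ⟩ =>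
        ⟨hA.union hB, by rw [union_inter_distrib_right, hAΩ, hBΩ, union_self]⟩)
      (fun _ _ hA hAB => ⟨measurableSet_of_tendsto_indicator atTop (fun n => (hA n).1) hAB,
        inter_eq_of_eventually_mem_iff (fun n => (hA n).2) hAB⟩)
      (fun _ hA _ hB => ν.cut_inter_add_cut_union_le hA.1 hB.1)
      (fun _ _ _ hAB => ν.cut_le_liminf hAB)
  have hE_le : ∀ F, MeasurableSet F → F ∩ Ωᶜ = E₀ ∩ Ωᶜ → PerKr K E Ω ≤ PerKr K F Ω :=
    fun F hF hFΩ => by rw [hPer hE, hPer hF]; exact hmin ⟨hF, hFΩ⟩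
  exact ⟨E, hE, (hE_le E₀ hE₀ rfl).trans_lt hE₀fin, hEΩ, fun F hF _ hFΩ => hE_le F hF hFΩ⟩

/-- existence of solutions to the nonlocal Plateau problem. -/
theorem plateau_existence {d : ℕ} (hd : 1 ≤ d)
    (K : V d → ℝ) (hKm : Measurable K) (hK0 : ∀ h, 0 ≤ K h) (hKe : ∀ h, K (-h) = K h)
    (Ω : Set (V d)) (hΩo : IsOpen Ω) (hΩb : Bornology.IsBounded Ω)
    (E₀ : Set (V d)) (hE₀ : MeasurableSet E₀) (hE₀fin : PerKr K E₀ Ω < ⊤) :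
    ∃ E : Set (V d), MeasurableSet E ∧ PerKr K E Ω < ⊤ ∧ E ∩ Ωᶜ = E₀ ∩ Ωᶜ ∧
      ∀ F : Set (V d), MeasurableSet F → PerKr K F Ω < ⊤ → F ∩ Ωᶜ = E₀ ∩ Ωᶜ →
        PerKr K E Ω ≤ PerKr K F Ω :=
  plateau_existence_general K hKm Ω hΩo E₀ hE₀ hE₀fin

end
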